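/- Let d = g ⊕ h be a Manin triple. In the direct sum Lie algebra d ⊕ d̄ (where d̄ is d with the negated bilinear form), the diagonal d_Δ = {(x,x) : x ∈ d} and the subspace g ⊕ h = {(ξ, ν) : ξ ∈ g, ν ∈ h} are both Lagrangian Lie subalgebras, and (d ⊕ d̄) = d_Δ ⊕ (g ⊕ h) as vector spaces; hence (d ⊕ d̄, d_Δ, g ⊕ h) is again a Manin triple (the Drinfeld double). -/

import Mathlib

/-- For a Manin triple `(d, g, h)`, in `d ⊕ d̄` (the direct sum Lie
algebra with the bilinear form `⟨(x₁,y₁),(x₂,y₂)⟩' = ⟨x₁,x₂⟩ - ⟨y₁,y₂⟩`) the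
diagonal `d_Δ` and the subspace `g ⊕ h` are Lagrangian Lie subalgebras, and
`d ⊕ d̄ = d_Δ ⊕ (g ⊕ h)`; hence `(d ⊕ d̄, d_Δ, g ⊕ h)` is again a Manin triple
(the Drinfeld double). -/
theorem drinfeld_double_manin_triple
    {K : Type*} [Field K]
    {d : Type*} [LieRing d] [LieAlgebra K d] [FiniteDimensional K d]
    (B : d →ₗ[K] d →ₗ[K] K)
    (hsymm : ∀ x y : d, B x y = B y x)
    (hnondeg : ∀ x : d, (∀ y : d, B x y = 0) → x = 0)
    (hinv : ∀ x y z : d, B ⁅x, y⁆ z + B y ⁅x, z⁆ = 0)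
    (g h : Submodule K d)
    (hgsub : ∀ x ∈ g, ∀ y ∈ g, ⁅x, y⁆ ∈ g)
    (hhsub : ∀ x ∈ h, ∀ y ∈ h, ⁅x, y⁆ ∈ h)
    (hg : ∀ x : d, x ∈ g ↔ ∀ y ∈ g, B x y = 0)
    (hh : ∀ x : d, x ∈ h ↔ ∀ y ∈ h, B x y = 0)
    (hc : IsCompl g h) :
    let B' : d × d → d × d → K := fun p q => B p.1 q.1 - B p.2 q.2
    let diag : Submodule K (d × d) :=
      LinearMap.range ((LinearMap.id : d →ₗ[K] d).prod (LinearMap.id : d →ₗ[K] d))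
    let gh : Submodule K (d × d) := g.prod h
    -- the diagonal is a Lagrangian Lie subalgebra
    ((∀ w : d × d, w ∈ diag ↔ ∀ w' ∈ diag, B' w w' = 0) ∧
     (∀ w ∈ diag, ∀ w' ∈ diag, ((⁅w.1, w'.1⁆ : d), (⁅w.2, w'.2⁆ : d)) ∈ diag)) ∧
    -- `g ⊕ h` is a Lagrangian Lie subalgebra
    ((∀ w : d × d, w ∈ gh ↔ ∀ w' ∈ gh, B' w w' = 0) ∧
     (∀ w ∈ gh, ∀ w' ∈ gh, ((⁅w.1, w'.1⁆ : d), (⁅w.2, w'.2⁆ : d)) ∈ gh)) ∧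
    -- and they are complementary: `d ⊕ d̄ = d_Δ ⊕ (g ⊕ h)`
    IsCompl diag gh := by

  intro B' diag gh
  have hdm : ∀ w : d × d, w ∈ diag ↔ w.1 = w.2 := by
    intro w
    constructor
    · rintro ⟨x, rfl⟩; rfl
    · intro hw; exact ⟨w.1, Prod.ext rfl hw⟩
  have hghm : ∀ w : d × d, w ∈ gh ↔ w.1 ∈ g ∧ w.2 ∈ h := fun w => Iff.rfl
  refine ⟨⟨?_, ?_⟩, ⟨?_, ?_⟩, ?_, ?_⟩
  · intro w
    constructor
    · intro hw w' hw'
      rw [hdm] at hw hw'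
      simp only [B', hw, hw']
      ring
    · intro hw
      rw [hdm]
      have : w.1 - w.2 = 0 := by
        apply hnondeg
        intro z
        have hz : (z, z) ∈ diag := (hdm (z, z)).mpr rfl
        have := hw (z, z) hz
        simp only [B'] at this
        rw [map_sub, LinearMap.sub_apply]
        exact this
      exact sub_eq_zero.mp this
  · intro w hw w' hw'
    rw [hdm] at hw hw' ⊢
    rw [hw, hw']
  · intro w
    constructor
    · intro hw w' hw'
      rw [hghm] at hw hw'
      simp only [B']
      rw [(hg w.1).mp hw.1 w'.1 hw'.1, (hh w.2).mp hw.2 w'.2 hw'.2]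
      ring
    · intro hw
      rw [hghm]
      constructor
      · rw [hg]
        intro y hy
        have := hw (y, 0) ⟨hy, h.zero_mem⟩
        simp only [B', map_zero] at this
        linear_combination this
      · rw [hh]
        intro y hy
        have := hw (0, y) ⟨g.zero_mem, hy⟩
        simp only [B'] at this
        rw [map_zero] at this
        linear_combination -this
  · intro w hw w' hw'
    rw [hghm] at hw hw' ⊢
    exact ⟨hgsub _ hw.1 _ hw'.1, hhsub _ hw.2 _ hw'.2⟩
  · rw [Submodule.disjoint_def]
    intro w hw hwg
    rw [hdm] at hw
    rw [hghm] at hwg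
    have h1 : w.1 = 0 := hc.disjoint.le_bot ⟨hwg.1, hw ▸ hwg.2⟩
    have h2 : w.2 = 0 := hw ▸ h1
    exact Prod.ext h1 h2
  · rw [codisjoint_iff, eq_top_iff]
    intro w _
    obtain ⟨ξ, hξ, ν, hν, hsum⟩ := Submodule.mem_sup.mp
      (hc.sup_eq_top ▸ Submodule.mem_top : w.1 - w.2 ∈ g ⊔ h)
    refine Submodule.mem_sup.mpr ⟨(w.1 - ξ, w.1 - ξ), (hdm _).mpr rfl, (ξ, -ν), ⟨hξ, h.neg_mem hν⟩, ?_⟩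
    have : w.1 - ξ + -ν = w.2 := by
      have : ξ + ν = w.1 - w.2 := hsum
      have h1 : ξ + ν = w.1 - w.2 := hsum
      linear_combination (norm := abel) -h1
    refine Prod.ext ?_ ?_
    · show w.1 - ξ + ξ = w.1; abel
    · show w.1 - ξ + -ν = w.2; exact this
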